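/- For all complex numbers x, y with x ≠ 0, y ≠ 0 and x + y ≠ 0, one has R̄₁₂(x+y) R̄₁₃(x) R₂₃(y) = R₂₃(y) R̄₁₃(x) R̄₁₂(x+y) as operators on (ℂⁿ)^{⊗3}. -/

import Mathlib

noncomputable section
open scoped Kronecker
open Matrix

/-- Square matrices acting on the tensor power `(ℂⁿ)^{⊗ι}`, modelled on the
function basis `ι → Fin n`. -/
abbrev TMat (ι : Type) (n : ℕ) := Matrix (ι → Fin n) (ι → Fin n) ℂ

/-- The matrix units `E_{ij}` of `End(ℂⁿ)`. -/
def matE (n : ℕ) (i j : Fin n) : Matrix (Fin n) (Fin n) ℂ := Matrix.single i j 1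

/-- The flip `P = Σ E_{ij} ⊗ E_{ji}` on `ℂⁿ ⊗ ℂⁿ`. -/
def flipP (n : ℕ) : Matrix (Fin n × Fin n) (Fin n × Fin n) ℂ :=
  ∑ i : Fin n, ∑ j : Fin n, matE n i j ⊗ₖ matE n j i

/-- `P̄ = Σ E_{ij} ⊗ E_{ij}` on `ℂⁿ ⊗ ℂⁿ`. -/
def PbarM (n : ℕ) : Matrix (Fin n × Fin n) (Fin n × Fin n) ℂ :=
  ∑ i : Fin n, ∑ j : Fin n, matE n i j ⊗ₖ matE n i j

/-- The conjugate `X̃ = G⁻¹ Xᵀ G` of `X` relative to the bilinear form with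
Gram matrix `G`, i.e. `⟨X u, v⟩ = ⟨u, X̃ v⟩` where `⟨u, v⟩ = uᵀ G v`. -/
def conjF {n : ℕ} (G X : Matrix (Fin n) (Fin n) ℂ) : Matrix (Fin n) (Fin n) ℂ :=
  G⁻¹ * Xᵀ * G

/-- `P̃ = Σ Ẽ_{ij} ⊗ E_{ji}`. -/
def PtilM (n : ℕ) (G : Matrix (Fin n) (Fin n) ℂ) : Matrix (Fin n × Fin n) (Fin n × Fin n) ℂ :=
  ∑ i : Fin n, ∑ j : Fin n, conjF G (matE n i j) ⊗ₖ matE n j i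

/-- `P̂ = Σ Ẽ_{ij} ⊗ E_{ij}`. -/
def PhatM (n : ℕ) (G : Matrix (Fin n) (Fin n) ℂ) : Matrix (Fin n × Fin n) (Fin n × Fin n) ℂ :=
  ∑ i : Fin n, ∑ j : Fin n, conjF G (matE n i j) ⊗ₖ matE n i j

/-- The Yang R-matrix `R(x) = 1 − P x⁻¹`. -/
def Rm (n : ℕ) (x : ℂ) : Matrix (Fin n × Fin n) (Fin n × Fin n) ℂ := 1 - x⁻¹ • flipP n

/-- `R̄(x) = 1 − P̄ x⁻¹`. -/
def RbarM (n : ℕ) (x : ℂ) : Matrix (Fin n × Fin n) (Fin n × Fin n) ℂ := 1 - x⁻¹ • PbarM n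

/-- `R̃(x) = 1 − P̃ x⁻¹`. -/
def RtilM (n : ℕ) (G : Matrix (Fin n) (Fin n) ℂ) (x : ℂ) :
    Matrix (Fin n × Fin n) (Fin n × Fin n) ℂ := 1 - x⁻¹ • PtilM n G

/-- `R̂(x) = 1 − P̂ x⁻¹`. -/
def RhatM (n : ℕ) (G : Matrix (Fin n) (Fin n) ℂ) (x : ℂ) :
    Matrix (Fin n × Fin n) (Fin n × Fin n) ℂ := 1 - x⁻¹ • PhatM n G

/-- `Z_{ij}` : the operator on a tensor power of `ℂⁿ` acting as the two-factor
operator `Z` in the `i`-th and `j`-th tensor factors and as the identity elsewhere. -/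
def lift2 {n : ℕ} {ι : Type} [Fintype ι] [DecidableEq ι] (i j : ι)
    (Z : Matrix (Fin n × Fin n) (Fin n × Fin n) ℂ) : TMat ι n :=
  fun f g => Z (f i, f j) (g i, g j) *
    ∏ p : ι, if p = i ∨ p = j then 1 else (if f p = g p then 1 else 0)

/-!
Write `A = P̄₁₂`, `B = P̄₁₃`, `C = P₂₃`. A direct computation gives `AC = CB = AB` and `C² = 1`;
since `A`, `B`, `C` are symmetric, transposing gives `CA = BC = BA`. Hence both triple products
collapse to `A`, and the two sides of the identity differ by `(ab + ac - bc)(AB - BA)` with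
`a = (x+y)⁻¹`, `b = x⁻¹`, `c = y⁻¹`, which vanishes because `1/((x+y)x) + 1/((x+y)y) = 1/(xy)`.
-/

theorem yangBaxter_of_relations {k R : Type*} [CommRing k] [Ring R] [Algebra k R]
    {A B C : R} (hAC : A * C = A * B) (hCB : C * B = A * B) (hCA : C * A = B * A)
    (hBC : B * C = B * A) (hCC : C * C = 1) {a b c : k} (habc : a * b + a * c = b * c) :
    (1 - a • A) * (1 - b • B) * (1 - c • C) = (1 - c • C) * (1 - b • B) * (1 - a • A) := by
  have hABC : A * B * C = A := by rw [← hAC, mul_assoc, hCC, mul_one]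
  have hCBA : C * B * A = A := by rw [mul_assoc, ← hCA, ← mul_assoc, hCC, one_mul]
  simp only [sub_mul, mul_sub, one_mul, mul_one, smul_mul_assoc, mul_smul_comm, smul_smul,
    smul_sub, ← mul_assoc]
  rw [hABC, hCBA, hAC, hCB, hCA, hBC]
  linear_combination (norm := module) habc • (A * B - B * A)

section lift2

variable {ι : Type} [Fintype ι] [DecidableEq ι] {n : ℕ} (i j : ι)

theorem lift2_one : (lift2 i j 1 : TMat ι n) = 1 := by
  ext f g
  by_cases hfg : f = g
  · subst hfg
    simp [lift2]
  obtain ⟨p, hp⟩ := Function.ne_iff.mp hfg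
  rw [one_apply_ne hfg, lift2]
  by_cases hpij : p = i ∨ p = j
  · rcases hpij with rfl | rfl <;> simp [hp]
  · exact mul_eq_zero_of_right _ (Finset.prod_eq_zero (Finset.mem_univ p) (by simp [hpij, hp]))

theorem lift2_sub (Z W : Matrix (Fin n × Fin n) (Fin n × Fin n) ℂ) :
    lift2 i j (Z - W) = lift2 i j Z - lift2 i j W := by
  ext f g
  simp [lift2, sub_mul]

theorem lift2_smul (s : ℂ) (Z : Matrix (Fin n × Fin n) (Fin n × Fin n) ℂ) :
    lift2 i j (s • Z) = s • lift2 i j Z := by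
  ext f g
  simp [lift2, mul_assoc]

theorem lift2_RbarM (s : ℂ) : lift2 i j (RbarM n s) = 1 - s⁻¹ • lift2 i j (PbarM n) := by
  rw [RbarM, lift2_sub, lift2_smul, lift2_one]

theorem lift2_Rm (s : ℂ) : lift2 i j (Rm n s) = 1 - s⁻¹ • lift2 i j (flipP n) := by
  rw [Rm, lift2_sub, lift2_smul, lift2_one]

theorem transpose_lift2 (Z : Matrix (Fin n × Fin n) (Fin n × Fin n) ℂ) :
    (lift2 i j Z)ᵀ = lift2 i j Zᵀ := by
  ext f g
  simp [lift2, eq_comm]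

end lift2

theorem PbarM_apply (n : ℕ) (a b c d : Fin n) :
    PbarM n (a, b) (c, d) = if a = b ∧ c = d then 1 else 0 := by
  simp [PbarM, matE, Matrix.sum_apply, single, ite_and, eq_comm]

theorem flipP_apply (n : ℕ) (a b c d : Fin n) :
    flipP n (a, b) (c, d) = if a = d ∧ b = c then 1 else 0 := by
  simp [flipP, matE, Matrix.sum_apply, single, ite_and, eq_comm]

theorem transpose_PbarM (n : ℕ) : (PbarM n)ᵀ = PbarM n := by
  ext ⟨a, b⟩ ⟨c, d⟩
  simp only [transpose_apply, PbarM_apply, and_comm]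

theorem transpose_flipP (n : ℕ) : (flipP n)ᵀ = flipP n := by
  ext ⟨a, b⟩ ⟨c, d⟩
  simp only [transpose_apply, flipP_apply, and_comm, eq_comm]

theorem Fintype.sum_fin_three_arrow {M α : Type*} [AddCommMonoid M] [Fintype α]
    (F : (Fin 3 → α) → M) : ∑ f, F f = ∑ a, ∑ b, ∑ c, F ![a, b, c] := by
  simp only [← (Fin.consEquiv fun _ => α).sum_comp, Fintype.sum_prod_type, Fintype.sum_unique]
  rfl

-- The tensor factors `1, 2, 3` of the statement are indexed by `0, 1, 2 : Fin 3`.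
def pbar12 (n : ℕ) : TMat (Fin 3) n := lift2 0 1 (PbarM n)

def pbar13 (n : ℕ) : TMat (Fin 3) n := lift2 0 2 (PbarM n)

def flip23 (n : ℕ) : TMat (Fin 3) n := lift2 1 2 (flipP n)

section fin3

variable {n : ℕ} (f g : Fin 3 → Fin n)

theorem pbar12_apply : pbar12 n f g = if f 2 = g 2 ∧ f 0 = f 1 ∧ g 0 = g 1 then 1 else 0 := by
  simp [pbar12, lift2, Fin.prod_univ_three, PbarM_apply, ite_and]

theorem pbar13_apply : pbar13 n f g = if f 1 = g 1 ∧ f 0 = f 2 ∧ g 0 = g 2 then 1 else 0 := by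
  simp [pbar13, lift2, Fin.prod_univ_three, PbarM_apply, ite_and]

theorem flip23_apply : flip23 n f g = if f 0 = g 0 ∧ f 1 = g 2 ∧ f 2 = g 1 then 1 else 0 := by
  simp [flip23, lift2, Fin.prod_univ_three, flipP_apply, ite_and]

end fin3

theorem pbar12_mul_flip23 (n : ℕ) : pbar12 n * flip23 n = pbar12 n * pbar13 n := by
  ext f g
  simp only [mul_apply, Fintype.sum_fin_three_arrow, pbar12_apply, pbar13_apply, flip23_apply,
    cons_val_zero, cons_val_one, cons_val_two, head_cons, tail_cons, ite_and, mul_ite, mul_one,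
    mul_zero, Finset.sum_ite_irrel, Finset.sum_const_zero, Finset.sum_ite_eq', Finset.mem_univ,
    if_true]
  split_ifs <;> simp_all

theorem flip23_mul_pbar13 (n : ℕ) : flip23 n * pbar13 n = pbar12 n * pbar13 n := by
  ext f g
  simp only [mul_apply, Fintype.sum_fin_three_arrow, pbar12_apply, pbar13_apply, flip23_apply,
    cons_val_zero, cons_val_one, cons_val_two, head_cons, tail_cons, ite_and, mul_ite, mul_one,
    mul_zero, Finset.sum_ite_irrel, Finset.sum_const_zero, Finset.sum_ite_eq', Finset.mem_univ,
    if_true]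
  split_ifs <;> simp_all [eq_comm]

theorem flip23_mul_self (n : ℕ) : flip23 n * flip23 n = 1 := by
  ext f g
  simp only [mul_apply, Fintype.sum_fin_three_arrow, flip23_apply, cons_val_zero, cons_val_one,
    cons_val_two, head_cons, tail_cons, ite_and, mul_ite, mul_one, mul_zero, Finset.sum_ite_irrel,
    Finset.sum_const_zero, Finset.sum_ite_eq', Finset.mem_univ, if_true, one_apply]
  split_ifs <;> simp_all [funext_iff, Fin.forall_fin_succ]

theorem transpose_pbar12 (n : ℕ) : (pbar12 n)ᵀ = pbar12 n := by
  rw [pbar12, transpose_lift2, transpose_PbarM]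

theorem transpose_pbar13 (n : ℕ) : (pbar13 n)ᵀ = pbar13 n := by
  rw [pbar13, transpose_lift2, transpose_PbarM]

theorem transpose_flip23 (n : ℕ) : (flip23 n)ᵀ = flip23 n := by
  rw [flip23, transpose_lift2, transpose_flipP]

theorem flip23_mul_pbar12 (n : ℕ) : flip23 n * pbar12 n = pbar13 n * pbar12 n := by
  simpa only [transpose_mul, transpose_pbar12, transpose_pbar13, transpose_flip23] using
    congrArg transpose (pbar12_mul_flip23 n)

theorem pbar13_mul_flip23 (n : ℕ) : pbar13 n * flip23 n = pbar13 n * pbar12 n := by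
  simpa only [transpose_mul, transpose_pbar12, transpose_pbar13, transpose_flip23] using
    congrArg transpose (flip23_mul_pbar13 n)

theorem stmt1_general (n : ℕ) (x y : ℂ) (hx : x ≠ 0) (hy : y ≠ 0) (hxy : x + y ≠ 0) :
    lift2 (0 : Fin 3) 1 (RbarM n (x + y)) * lift2 (0 : Fin 3) 2 (RbarM n x) *
      lift2 (1 : Fin 3) 2 (Rm n y)
  = lift2 (1 : Fin 3) 2 (Rm n y) * lift2 (0 : Fin 3) 2 (RbarM n x) *
      lift2 (0 : Fin 3) 1 (RbarM n (x + y)) := by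
  have hscalar : (x + y)⁻¹ * x⁻¹ + (x + y)⁻¹ * y⁻¹ = x⁻¹ * y⁻¹ := by
    field_simp
    ring
  simp only [lift2_RbarM, lift2_Rm]
  exact yangBaxter_of_relations (pbar12_mul_flip23 n) (flip23_mul_pbar13 n) (flip23_mul_pbar12 n)
    (pbar13_mul_flip23 n) (flip23_mul_self n) hscalar

/-- `R̄₁₂(x+y) R̄₁₃(x) R₂₃(y) = R₂₃(y) R̄₁₃(x) R̄₁₂(x+y)` on `(ℂⁿ)^{⊗3}`. -/
theorem stmt1 (n : ℕ) (hn : 1 ≤ n) (x y : ℂ) (hx : x ≠ 0) (hy : y ≠ 0) (hxy : x + y ≠ 0) :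
    lift2 (0 : Fin 3) 1 (RbarM n (x + y)) * lift2 (0 : Fin 3) 2 (RbarM n x) *
      lift2 (1 : Fin 3) 2 (Rm n y)
  = lift2 (1 : Fin 3) 2 (Rm n y) * lift2 (0 : Fin 3) 2 (RbarM n x) *
      lift2 (0 : Fin 3) 1 (RbarM n (x + y)) :=
  stmt1_general n x y hx hy hxy
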